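/- Let a, b, c be real numbers with 1 + c + 2a = 0, −1 ≤ c ≤ 1, and a² + b² ≤ 1. If 1 − c − 2b ≥ 0, 1 − c + 2b ≥ 0, and −1 ≤ a ≤ 0, then there exists a 4×4 doubly stochastic matrix D with trace zero whose eigenvalues, counted with algebraic multiplicity, are 1, c, a + ib, a − ib (where i is the imaginary unit). -/

import Mathlib

open Matrix Polynomial

/-- A real square matrix is doubly stochastic if its entries are nonnegative and all of its
row sums and column sums are equal to `1`. -/
def DoublyStochastic {n : ℕ} (D : Matrix (Fin n) (Fin n) ℝ) : Prop :=
  (∀ i j, 0 ≤ D i j) ∧ (∀ i, ∑ j, D i j = 1) ∧ (∀ j, ∑ i, D i j = 1)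

/-!
The matrix is the circulant with zero diagonal and off-diagonal weights
`p = (1 + a + b) / 2`, `q = -a`, `r = (1 + a - b) / 2`. The hypotheses make these weights
nonnegative with sum `1`, so the circulant is doubly stochastic, and the eigenvalues of a
`4 × 4` circulant are the values of its generating polynomial at the fourth roots of unity:
`p + q + r = 1`, `q - p - r = c` and `-q ± i (p - r) = a ± i b`.
-/

theorem doublyStochastic_circulant {n : ℕ} [NeZero n] {v : Fin n → ℝ} (hv : ∀ i, 0 ≤ v i)
    (hsum : ∑ i, v i = 1) : DoublyStochastic (circulant v) :=
  ⟨fun i j => hv (i - j),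
    fun i => (Fintype.sum_equiv (Equiv.subLeft i) _ _ fun _ => rfl).trans hsum,
    fun j => (Fintype.sum_equiv (Equiv.subRight j) _ _ fun _ => rfl).trans hsum⟩

theorem trace_circulant {ι R : Type*} [Fintype ι] [AddGroup ι] [AddCommMonoid R] (v : ι → R) :
    (circulant v).trace = Fintype.card ι • v 0 := by
  simp [Matrix.trace, circulant_apply]

theorem charpoly_circulant_fin_four {R : Type*} [CommRing R] (p q r : R) :
    (circulant ![0, p, q, r]).charpoly =
      (X - C (p + q + r)) * (X - C (q - p - r)) * ((X + C q) ^ 2 + C ((p - r) ^ 2)) := by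
  rw [Matrix.charpoly, det_succ_row_zero, Fin.sum_univ_four]
  simp [det_fin_three, Fin.succAbove, circulant_apply]
  ring

theorem X_sub_C_mul_X_sub_C_conj (a b : ℝ) :
    (X - C ((a : ℂ) + b * Complex.I)) * (X - C ((a : ℂ) - b * Complex.I)) =
      ((X - C a) ^ 2 + C (b ^ 2)).map (algebraMap ℝ ℂ) := by
  have hI : (C Complex.I : ℂ[X]) * C Complex.I = -1 := by
    rw [← C_mul, Complex.I_mul_I, C_neg, C_1]
  simp only [Polynomial.map_add, Polynomial.map_sub, Polynomial.map_pow, map_X, map_C,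
    C_add, C_sub, C_mul, C_pow, Complex.coe_algebraMap]
  linear_combination -C (b : ℂ) ^ 2 * hI

theorem diep_four_complex_trace_zero_general (a b c : ℝ)
    (htr : 1 + c + 2 * a = 0)
    (h1 : 0 ≤ 1 - c - 2 * b)
    (h2 : 0 ≤ 1 - c + 2 * b)
    (h4 : a ≤ 0) :
    ∃ D : Matrix (Fin 4) (Fin 4) ℝ, DoublyStochastic D ∧ D.trace = 0 ∧
      D.charpoly.map (algebraMap ℝ ℂ) =
        (X - C 1) * (X - C (c : ℂ)) *
          (X - C ((a : ℂ) + (b : ℂ) * Complex.I)) *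
          (X - C ((a : ℂ) - (b : ℂ) * Complex.I)) := by
  refine ⟨circulant ![0, (1 + a + b) / 2, -a, (1 + a - b) / 2], ?_, ?_, ?_⟩
  · refine doublyStochastic_circulant (fun i => ?_) ?_
    · fin_cases i <;>
        simp only [Fin.zero_eta, Fin.mk_one, Fin.reduceFinMk, cons_val_zero, cons_val_one, cons_val] <;>
        linarith
    · simp only [Fin.sum_univ_four, Fin.isValue, cons_val_zero, cons_val_one, cons_val]
      ring
  · simp [trace_circulant]
  · have hc : -a - (1 + a + b) / 2 - (1 + a - b) / 2 = c := by linarith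
    rw [charpoly_circulant_fin_four, mul_assoc _ _ (X - C _), X_sub_C_mul_X_sub_C_conj, hc,
      show (1 + a + b) / 2 + -a + (1 + a - b) / 2 = 1 by ring,
      show (1 + a + b) / 2 - (1 + a - b) / 2 = b by ring, C_neg, ← sub_eq_add_neg]
    simp

/-- If `a, b, c` are real with `1 + c + 2a = 0`, `-1 ≤ c ≤ 1`, `a² + b² ≤ 1`,
`1 - c - 2b ≥ 0`, `1 - c + 2b ≥ 0` and `-1 ≤ a ≤ 0`, then `1, c, a + ib, a - ib` is the
spectrum of a `4 × 4` doubly stochastic matrix with zero trace. -/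
theorem diep_four_complex_trace_zero (a b c : ℝ)
    (htr : 1 + c + 2 * a = 0) (hc1 : -1 ≤ c) (hc2 : c ≤ 1)
    (hab : a ^ 2 + b ^ 2 ≤ 1)
    (h1 : 0 ≤ 1 - c - 2 * b)
    (h2 : 0 ≤ 1 - c + 2 * b)
    (h3 : -1 ≤ a) (h4 : a ≤ 0) :
    ∃ D : Matrix (Fin 4) (Fin 4) ℝ, DoublyStochastic D ∧ D.trace = 0 ∧
      D.charpoly.map (algebraMap ℝ ℂ) =
        (X - C 1) * (X - C (c : ℂ)) *
          (X - C ((a : ℂ) + (b : ℂ) * Complex.I)) *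
          (X - C ((a : ℂ) - (b : ℂ) * Complex.I)) :=
  diep_four_complex_trace_zero_general a b c htr h1 h2 h4
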